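/- Let m ≥ 1, let M, N ⊆ [m] with M ⊊ [m] and |M|+|N| ≥ 1, and let D^c = E^m ∖ (aΔ_M + cΔ_N), the family (at₁+ct₂) indexed by the pairs (t₁,t₂) ∈ (F₂^m × F₂^m) ∖ (Δ_M × Δ_N). Then the linear left-E-code C^L_{D^c} has length |D^c| = 2^{2m}−2^{|M|+|N|} and size 2^{2m}, and the multiset {wt_Lee(c^L_{D^c}(v)) : v ∈ E^m} (with multiplicity over all 2^{2m} elements v ∈ E^m) consists of: 2^{2m} with multiplicity 2^{2m−2|M|}−2^{m−|M|+1}+1; 2^{2m−1} with multiplicity 2^{m−|M|+1}−2; 2^{2m}−2^{|M|+|N|} with multiplicity 2^{2m}−2^{2m−|M|+1}+2^{2m−2|M|}; 2^{2m}−2^{|M|+|N|−1} with multiplicity 2^{2m−|M|+1}−2^{2m−2|M|+1}−2^{m+1}+2^{m−|M|+1}; 2^{2m−1}−2^{|M|+|N|−1} with multiplicity 2^{m+1}−2^{m−|M|+1}; and 0 with multiplicity 1. -/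
import Mathlib


open Finset

/-- The simplicial complex `Δ_M ⊆ 𝔽₂^m` generated by `M ⊆ [m]`:
all vectors whose support is contained in `M`. -/
def deltaC {m : ℕ} (M : Finset (Fin m)) : Finset (Fin m → ZMod 2) :=
  Finset.univ.filter (fun w => ∀ i, w i ≠ 0 → i ∈ M)

/-- Dot product over `𝔽₂`. -/
def dotp {m : ℕ} (x y : Fin m → ZMod 2) : ZMod 2 := ∑ i, x i * y i

/-- The Gray map on a single element `a·s + c·t ↔ (s, t)` of `E = 𝔽₂ × 𝔽₂`:
`Φ(as + ct) = (t, s + t)`. -/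
def grayPair (e : ZMod 2 × ZMod 2) : Fin 2 → ZMod 2 := ![e.2, e.1 + e.2]

/-- The left codeword `c^L_D(v)` for `v = aα + cβ ↔ (α, β)`:
its coordinate at `d = (t₁, t₂) ∈ D` is `a(α·t₁) + c(β·t₁) ↔ (α·t₁, β·t₁)`. -/
def cwL {m : ℕ} (Ds : Finset ((Fin m → ZMod 2) × (Fin m → ZMod 2)))
    (v : (Fin m → ZMod 2) × (Fin m → ZMod 2)) :
    {d // d ∈ Ds} → ZMod 2 × ZMod 2 :=
  fun d => (dotp v.1 d.1.1, dotp v.2 d.1.1)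

/-- The Gray image `Φ(c^L_D(v)) ∈ 𝔽₂^{2|D|}` of the left codeword `c^L_D(v)`;
its Hamming weight (`hammingNorm`) is the Lee weight of `c^L_D(v)`. -/
def gcwL {m : ℕ} (Ds : Finset ((Fin m → ZMod 2) × (Fin m → ZMod 2)))
    (v : (Fin m → ZMod 2) × (Fin m → ZMod 2)) :
    {d // d ∈ Ds} × Fin 2 → ZMod 2 :=
  fun x => grayPair (cwL Ds v x.1) x.2

/-- The right codeword `c^R_D(v)` for `v = aα + cβ ↔ (α, β)`:
its coordinate at `d = (t₁, t₂) ∈ D` is `a(t₁·α) + c(t₂·α) ↔ (t₁·α, t₂·α)`. -/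
def cwR {m : ℕ} (Ds : Finset ((Fin m → ZMod 2) × (Fin m → ZMod 2)))
    (v : (Fin m → ZMod 2) × (Fin m → ZMod 2)) :
    {d // d ∈ Ds} → ZMod 2 × ZMod 2 :=
  fun d => (dotp d.1.1 v.1, dotp d.1.2 v.1)

/-- The Gray image `Φ(c^R_D(v)) ∈ 𝔽₂^{2|D|}` of the right codeword `c^R_D(v)`;
its Hamming weight (`hammingNorm`) is the Lee weight of `c^R_D(v)`. -/
def gcwR {m : ℕ} (Ds : Finset ((Fin m → ZMod 2) × (Fin m → ZMod 2)))
    (v : (Fin m → ZMod 2) × (Fin m → ZMod 2)) :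
    {d // d ∈ Ds} × Fin 2 → ZMod 2 :=
  fun x => grayPair (cwR Ds v x.1) x.2

section AuxLemmas

variable {m : ℕ}

lemma mem_deltaC {M : Finset (Fin m)} {w : Fin m → ZMod 2} :
    w ∈ deltaC M ↔ ∀ i, w i ≠ 0 → i ∈ M := by simp [deltaC]

lemma dotp_add_left (x y t : Fin m → ZMod 2) : dotp (x + y) t = dotp x t + dotp y t := by
  simp [dotp, add_mul, Finset.sum_add_distrib]

lemma dotp_add_right (x t t' : Fin m → ZMod 2) : dotp x (t + t') = dotp x t + dotp x t' := by
  simp [dotp, mul_add, Finset.sum_add_distrib]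

lemma dotp_zero_left (t : Fin m → ZMod 2) : dotp 0 t = 0 := by simp [dotp]

lemma dotp_single (x : Fin m → ZMod 2) (i : Fin m) :
    dotp x (Pi.single i 1) = x i := by
  rw [dotp, Finset.sum_eq_single i]
  · simp
  · intro j _ hj; simp [Pi.single_eq_of_ne hj]
  · simp

lemma card_deltaC (M : Finset (Fin m)) : (deltaC M).card = 2 ^ M.card := by
  classical
  have h : (deltaC M).card = (Finset.univ : Finset (M → ZMod 2)).card := by
    refine Finset.card_bij' (fun w _ => fun i : M => w i.1)
      (fun f _ => fun i => if h : i ∈ M then f ⟨i, h⟩ else 0) ?_ ?_ ?_ ?_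
    · intro w _; exact Finset.mem_univ _
    · intro f _
      rw [mem_deltaC]
      intro i hi
      by_contra hiM
      simp [dif_neg hiM] at hi
    · intro w hw
      funext i
      by_cases hi : i ∈ M
      · simp [dif_pos hi]
      · simp only [dif_neg hi]
        by_contra h0
        exact hi (mem_deltaC.mp hw i (fun hh => h0 hh.symm))
    · intro f _
      funext i
      simp
  rw [h, Finset.card_univ]
  simp

lemma zero_count (M : Finset (Fin m)) (γ : Fin m → ZMod 2) (hγ : ∀ i ∈ M, γ i = 0) :
    ((deltaC M).filter (fun t => dotp γ t ≠ 0)).card = 0 := by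
  rw [Finset.card_eq_zero, Finset.filter_eq_empty_iff]
  intro t ht
  simp only [ne_eq, not_not]
  rw [dotp]
  apply Finset.sum_eq_zero
  intro i _
  by_cases h : t i = 0
  · simp [h]
  · rw [hγ i (mem_deltaC.mp ht i h)]; ring

lemma half_count (M : Finset (Fin m)) (γ : Fin m → ZMod 2) {i₀ : Fin m} (hi₀ : i₀ ∈ M)
    (hγ : γ i₀ ≠ 0) :
    ((deltaC M).filter (fun t => dotp γ t ≠ 0)).card = 2 ^ (M.card - 1) := by
  classical
  have hzmod : ∀ a : ZMod 2, a ≠ 0 → a = 1 := by decide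
  have hzmod2 : ∀ a : ZMod 2, a + a = 0 := by decide
  set t₀ : Fin m → ZMod 2 := Pi.single i₀ 1 with ht₀
  have hmem : ∀ t ∈ deltaC M, t + t₀ ∈ deltaC M := by
    intro t ht
    rw [mem_deltaC]
    intro i hi
    by_cases h : t i = 0
    · have h1 : t₀ i ≠ 0 := by
        intro h0; apply hi; simp [h, h0]
      have h2 : i = i₀ := by
        by_contra hne
        exact h1 (Pi.single_eq_of_ne hne 1)
      rwa [h2]
    · exact mem_deltaC.mp ht i h
  have hdot : ∀ t : Fin m → ZMod 2, dotp γ (t + t₀) = dotp γ t + 1 := by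
    intro t
    rw [dotp_add_right, ht₀, dotp_single, hzmod _ hγ]
  have hflip1 : ∀ x : ZMod 2, x ≠ 0 → x + 1 = 0 := by decide
  have hflip2 : ∀ x : ZMod 2, x = 0 → x + 1 ≠ 0 := by decide
  have hcan : ∀ t : Fin m → ZMod 2, t + t₀ + t₀ = t := by
    intro t; funext i
    have h := hzmod2 (t₀ i)
    simp only [Pi.add_apply, add_assoc, h, add_zero]
  have hcard : ((deltaC M).filter (fun t => dotp γ t ≠ 0)).card
      = ((deltaC M).filter (fun t => dotp γ t = 0)).card := by
    refine Finset.card_bij' (fun t _ => t + t₀) (fun t _ => t + t₀) ?_ ?_ ?_ ?_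
    · intro t ht
      rw [Finset.mem_filter] at ht ⊢
      exact ⟨hmem t ht.1, by rw [hdot]; exact hflip1 _ ht.2⟩
    · intro t ht
      rw [Finset.mem_filter] at ht ⊢
      exact ⟨hmem t ht.1, by rw [hdot]; exact hflip2 _ ht.2⟩
    · intro t _; exact hcan t
    · intro t _; exact hcan t
  have hsplit := Finset.card_filter_add_card_filter_not
    (s := deltaC M) (p := fun t => dotp γ t ≠ 0)
  simp only [not_not] at hsplit
  rw [card_deltaC] at hsplit
  have hM1 : 1 ≤ M.card := Finset.card_pos.mpr ⟨i₀, hi₀⟩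
  have hpow : 2 ^ M.card = 2 * 2 ^ (M.card - 1) := by
    rw [← pow_succ']
    congr 1
    omega
  omega

lemma hn_split (Ds : Finset ((Fin m → ZMod 2) × (Fin m → ZMod 2)))
    (v : (Fin m → ZMod 2) × (Fin m → ZMod 2)) :
    hammingNorm (gcwL Ds v) =
      (Ds.filter fun d => dotp v.2 d.1 ≠ 0).card +
      (Ds.filter fun d => dotp (v.1 + v.2) d.1 ≠ 0).card := by
  classical
  rw [hammingNorm]
  rw [Finset.card_filter]
  rw [Fintype.sum_prod_type]
  have hpt : ∀ a : {d // d ∈ Ds},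
      (∑ j : Fin 2, if gcwL Ds v (a, j) ≠ 0 then 1 else 0) =
      ((if dotp v.2 a.1.1 ≠ 0 then 1 else 0) +
       (if dotp (v.1 + v.2) a.1.1 ≠ 0 then 1 else 0) : ℕ) := by
    intro a
    rw [Fin.sum_univ_two]
    have e0 : gcwL Ds v (a, 0) = dotp v.2 a.1.1 := by simp [gcwL, grayPair, cwL]
    have e1 : gcwL Ds v (a, 1) = dotp (v.1 + v.2) a.1.1 := by
      simp only [gcwL, grayPair, cwL]
      simp only [Matrix.cons_val_one, Matrix.head_cons]
      exact (dotp_add_left v.1 v.2 a.1.1).symm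
    rw [e0, e1]
  rw [Finset.sum_congr rfl (fun a _ => hpt a), Finset.sum_add_distrib,
    Finset.card_filter, Finset.card_filter]
  congr 1
  · rw [Finset.univ_eq_attach]
    exact Finset.sum_attach Ds (fun d => if dotp v.2 d.1 ≠ 0 then 1 else 0)
  · rw [Finset.univ_eq_attach]
    exact Finset.sum_attach Ds (fun d => if dotp (v.1 + v.2) d.1 ≠ 0 then 1 else 0)

lemma gval (M N : Finset (Fin m)) (γ : Fin m → ZMod 2) :
    (((deltaC M ×ˢ deltaC N)ᶜ).filter (fun d => dotp γ d.1 ≠ 0)).card =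
      ((Finset.univ.filter (fun t => dotp γ t ≠ 0)).card) * 2 ^ m -
      (((deltaC M).filter (fun t => dotp γ t ≠ 0)).card) * (deltaC N).card := by
  classical
  have h1 : ((deltaC M ×ˢ deltaC N)ᶜ).filter (fun d => dotp γ d.1 ≠ 0) =
      (Finset.univ.filter (fun d : (Fin m → ZMod 2) × (Fin m → ZMod 2) => dotp γ d.1 ≠ 0)) \
      ((deltaC M ×ˢ deltaC N).filter (fun d => dotp γ d.1 ≠ 0)) := by
    ext d
    simp only [Finset.mem_filter, Finset.mem_compl, Finset.mem_sdiff, Finset.mem_univ,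
      true_and]
    tauto
  have h2 : (Finset.univ.filter (fun d : (Fin m → ZMod 2) × (Fin m → ZMod 2) => dotp γ d.1 ≠ 0)) =
      (Finset.univ.filter (fun t => dotp γ t ≠ 0)) ×ˢ (Finset.univ : Finset (Fin m → ZMod 2)) := by
    ext d
    simp [Finset.mem_product]
  have h3 : ((deltaC M ×ˢ deltaC N).filter (fun d => dotp γ d.1 ≠ 0)) =
      ((deltaC M).filter (fun t => dotp γ t ≠ 0)) ×ˢ deltaC N := by
    ext d
    simp only [Finset.mem_filter, Finset.mem_product]
    tauto
  rw [h1, Finset.card_sdiff_of_subset, h2, h3, Finset.card_product, Finset.card_product]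
  · congr 2
    rw [Finset.card_univ]
    simp
  · rw [h2, h3]
    intro d hd
    rw [Finset.mem_product] at hd ⊢
    exact ⟨Finset.mem_filter.mpr ⟨Finset.mem_univ _, (Finset.mem_filter.mp hd.1).2⟩,
      Finset.mem_univ _⟩

lemma map_const_on {α : Type*} (s : Finset α) (f : α → ℕ) (c : ℕ) (h : ∀ a ∈ s, f a = c) :
    s.val.map f = Multiset.replicate s.card c := by
  rw [Multiset.map_congr rfl h, Multiset.map_const']
  rfl

lemma bind_const {α β : Type*} (s : Multiset α) (u : Multiset β) :
    (s.bind fun _ => u) = Multiset.card s • u := by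
  induction s using Multiset.induction_on with
  | empty => simp
  | cons a s ih =>
    simp only [Multiset.cons_bind, ih, Multiset.card_cons]
    rw [add_comm (Multiset.card s) 1, add_nsmul, one_nsmul]

lemma nsmul_replicate' {β : Type*} (n r : ℕ) (v : β) :
    n • Multiset.replicate r v = Multiset.replicate (n * r) v := by
  induction n with
  | zero => simp
  | succ n ih =>
    rw [succ_nsmul, ih, Nat.succ_mul, Multiset.replicate_add]

lemma multiset_decomp {α : Type*} [DecidableEq α] [Fintype α] (S : Finset α) (a₀ : α)
    (h₀ : a₀ ∈ S) :
    (Finset.univ : Finset α).val = ({a₀} : Finset α).val + (S.erase a₀).val + Sᶜ.val := by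
  have h1 : (Finset.univ : Finset α).val = S.val + Sᶜ.val := by
    have h : S.disjUnion Sᶜ disjoint_compl_right = Finset.univ := by
      ext x; simp [Finset.mem_disjUnion]
    rw [← h]; rfl
  have h2 : S.val = ({a₀} : Finset α).val + (S.erase a₀).val := by
    have h : ({a₀} : Finset α).disjUnion (S.erase a₀) (by simp) = S := by
      rw [Finset.disjUnion_eq_union]
      ext x
      simp only [Finset.mem_union, Finset.mem_singleton, Finset.mem_erase]
      constructor
      · rintro (rfl | ⟨_, hx⟩)
        · exact h₀
        · exact hx
      · intro hx
        by_cases hx0 : x = a₀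
        · exact Or.inl hx0
        · exact Or.inr ⟨hx0, hx⟩
    conv_lhs => rw [← h]
    rfl
  rw [h1, h2]

lemma big_multiset {α : Type*} [DecidableEq α] [Fintype α]
    (T0 T1 T2 : Finset α) (g : α → ℕ) (c1 c2 : ℕ) (a₀ : α)
    (hdec : (Finset.univ : Finset α).val = T0.val + T1.val + T2.val)
    (hT0 : T0 = {a₀}) (hg0 : g a₀ = 0)
    (hg1 : ∀ a ∈ T1, g a = c1) (hg2 : ∀ a ∈ T2, g a = c2) :
    (Finset.univ : Finset (α × α)).val.map (fun w => g w.1 + g w.2) =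
      (Multiset.replicate 1 0 + Multiset.replicate T1.card c1 + Multiset.replicate T2.card c2) +
      (Multiset.replicate T1.card c1 + Multiset.replicate (T1.card * T1.card) (c1 + c1) +
        Multiset.replicate (T1.card * T2.card) (c1 + c2)) +
      (Multiset.replicate T2.card c2 + Multiset.replicate (T2.card * T1.card) (c2 + c1) +
        Multiset.replicate (T2.card * T2.card) (c2 + c2)) := by
  classical
  have huniv : (Finset.univ : Finset (α × α)) = Finset.univ ×ˢ Finset.univ :=
    (Finset.univ_product_univ).symm
  rw [huniv, Finset.product_val]
  have hprod : (Finset.univ : Finset α).val ×ˢ (Finset.univ : Finset α).val =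
      (Finset.univ : Finset α).val.bind
        (fun a => (Finset.univ : Finset α).val.map (Prod.mk a)) := rfl
  rw [hprod, Multiset.map_bind]
  have hinner : ∀ c : ℕ, ((Finset.univ : Finset α).val.map (fun b => c + g b)) =
      Multiset.replicate 1 (c + 0) + Multiset.replicate T1.card (c + c1) +
      Multiset.replicate T2.card (c + c2) := by
    intro c
    rw [hdec, Multiset.map_add, Multiset.map_add]
    congr 1
    · congr 1
      · rw [map_const_on T0 _ (c + 0) (fun a ha => by
          rw [hT0] at ha; simp at ha; rw [ha, hg0])]
        rw [hT0]; rfl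
      · exact map_const_on T1 _ (c + c1) (fun a ha => by rw [hg1 a ha])
    · exact map_const_on T2 _ (c + c2) (fun a ha => by rw [hg2 a ha])
  have hmm : ∀ a : α, (((Finset.univ : Finset α).val.map (Prod.mk a)).map
      (fun w : α × α => g w.1 + g w.2)) =
      (Finset.univ : Finset α).val.map (fun b => g a + g b) := by
    intro a; rw [Multiset.map_map]; rfl
  rw [Multiset.bind_congr (fun a _ => hmm a)]
  rw [Multiset.bind_congr (fun a _ => hinner (g a))]
  conv_lhs => rw [hdec]
  rw [Multiset.add_bind, Multiset.add_bind]
  congr 1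
  · congr 1
    · rw [hT0]
      show ({a₀} : Multiset α).bind _ = _
      rw [Multiset.singleton_bind, hg0]
      simp only [Nat.zero_add, Nat.add_zero]
    · rw [Multiset.bind_congr (fun a ha => by
        rw [hg1 a (Finset.mem_val.mp ha)] :
        ∀ a ∈ T1.val, (Multiset.replicate 1 (g a + 0) + Multiset.replicate T1.card (g a + c1) +
          Multiset.replicate T2.card (g a + c2)) =
          (Multiset.replicate 1 (c1 + 0) + Multiset.replicate T1.card (c1 + c1) +
          Multiset.replicate T2.card (c1 + c2)))]
      rw [bind_const, nsmul_add, nsmul_add, nsmul_replicate', nsmul_replicate',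
        nsmul_replicate']
      have hc : Multiset.card T1.val = T1.card := rfl
      rw [hc]
      simp only [Nat.add_zero, Nat.mul_one]
  · rw [Multiset.bind_congr (fun a ha => by
      rw [hg2 a (Finset.mem_val.mp ha)] :
      ∀ a ∈ T2.val, (Multiset.replicate 1 (g a + 0) + Multiset.replicate T1.card (g a + c1) +
        Multiset.replicate T2.card (g a + c2)) =
        (Multiset.replicate 1 (c2 + 0) + Multiset.replicate T1.card (c2 + c1) +
        Multiset.replicate T2.card (c2 + c2)))]
    rw [bind_const, nsmul_add, nsmul_add, nsmul_replicate', nsmul_replicate',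
      nsmul_replicate']
    have hc : Multiset.card T2.val = T2.card := rfl
    rw [hc]
    simp only [Nat.add_zero, Nat.mul_one]

/-- reindexing bijection `(α, β) ↦ (β, α + β)` -/
def reidx (m : ℕ) :
    ((Fin m → ZMod 2) × (Fin m → ZMod 2)) ≃ ((Fin m → ZMod 2) × (Fin m → ZMod 2)) where
  toFun v := (v.2, v.1 + v.2)
  invFun w := (w.1 + w.2, w.1)
  left_inv v := by
    have hz : ∀ a b : ZMod 2, b + (a + b) = a := by decide
    ext i <;> simp [hz]
  right_inv w := by
    have hz : ∀ a b : ZMod 2, (a + b) + a = b := by decide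
    ext i <;> simp [hz]

end AuxLemmas
/-- count of coordinates in `Ds` where `γ` pairs nontrivially -/
def gfun {m : ℕ} (Ds : Finset ((Fin m → ZMod 2) × (Fin m → ZMod 2)))
    (γ : Fin m → ZMod 2) : ℕ :=
  (Ds.filter fun d => dotp γ d.1 ≠ 0).card

theorem stmt_4 {m : ℕ} (hm : 1 ≤ m) (M N : Finset (Fin m))
    (hMu : M ≠ Finset.univ) (hMN : 1 ≤ M.card + N.card)
    (Ds : Finset ((Fin m → ZMod 2) × (Fin m → ZMod 2)))
    (hDs : Ds = (deltaC M ×ˢ deltaC N)ᶜ) :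
    Ds.card = 2 ^ (2 * m) - 2 ^ (M.card + N.card) ∧
    ((Finset.univ : Finset ((Fin m → ZMod 2) × (Fin m → ZMod 2))).image (cwL Ds)).card = 2 ^ (2 * m) ∧
    (Finset.univ : Finset ((Fin m → ZMod 2) × (Fin m → ZMod 2))).val.map (fun v => hammingNorm (gcwL Ds v)) =
      Multiset.replicate (2 ^ (2 * m - 2 * M.card) - 2 ^ (m - M.card + 1) + 1)
          (2 ^ (2 * m)) +
      Multiset.replicate (2 ^ (m - M.card + 1) - 2)
          (2 ^ (2 * m - 1)) +
      Multiset.replicate (2 ^ (2 * m) + 2 ^ (2 * m - 2 * M.card) - 2 ^ (2 * m - M.card + 1))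
          (2 ^ (2 * m) - 2 ^ (M.card + N.card)) +
      Multiset.replicate (2 ^ (2 * m - M.card + 1) + 2 ^ (m - M.card + 1) - 2 ^ (2 * m - 2 * M.card + 1) - 2 ^ (m + 1))
          (2 ^ (2 * m) - 2 ^ (M.card + N.card - 1)) +
      Multiset.replicate (2 ^ (m + 1) - 2 ^ (m - M.card + 1))
          (2 ^ (2 * m - 1) - 2 ^ (M.card + N.card - 1)) +
      Multiset.replicate (1)
          (0) := by
  classical
  have hNm : N.card ≤ m := by
    have h := Finset.card_le_card (Finset.subset_univ N)
    simpa using h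
  have hMm : M.card < m := by
    have hss : M ⊂ Finset.univ := (Finset.subset_univ M).ssubset_of_ne hMu
    have h := Finset.card_lt_card hss
    simpa using h
  have hcardV : Fintype.card (Fin m → ZMod 2) = 2 ^ m := by simp
  have hDscard : Ds.card = 2 ^ (2 * m) - 2 ^ (M.card + N.card) := by
    rw [hDs, Finset.card_compl, Finset.card_product, card_deltaC, card_deltaC]
    congr 1
    · rw [Fintype.card_prod, hcardV, ← pow_add]
      congr 1; omega
    · rw [← pow_add]
  refine ⟨hDscard, ?_, ?_⟩
  · -- injectivity part
    have hz1 : ∀ a b : ZMod 2, a + b = 0 → a = b := by decide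
    have hzself : ∀ a : ZMod 2, a + a = 0 := by decide
    obtain ⟨j₀, hj₀⟩ : ∃ j, j ∉ M := by
      by_contra h
      push_neg at h
      exact hMu (Finset.eq_univ_iff_forall.mpr h)
    have hnotmem : ∀ t : Fin m → ZMod 2, t ∉ deltaC M → (t, (0 : Fin m → ZMod 2)) ∈ Ds := by
      intro t ht
      rw [hDs, Finset.mem_compl, Finset.mem_product]
      intro hc
      exact ht hc.1
    have hdet : ∀ γ : Fin m → ZMod 2, (∀ t, t ∉ deltaC M → dotp γ t = 0) → γ = 0 := by
      intro γ hγ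
      have hj0val : γ j₀ = 0 := by
        have hsm : Pi.single j₀ (1 : ZMod 2) ∉ deltaC M := by
          rw [mem_deltaC]; push_neg
          exact ⟨j₀, by simp, hj₀⟩
        have h := hγ _ hsm
        rwa [dotp_single] at h
      funext i
      by_cases hi : i ∈ M
      · have hne : i ≠ j₀ := fun h => hj₀ (h ▸ hi)
        have hsm : Pi.single i (1 : ZMod 2) + Pi.single j₀ 1 ∉ deltaC M := by
          rw [mem_deltaC]; push_neg
          refine ⟨j₀, ?_, hj₀⟩
          simp [Pi.single_eq_of_ne (Ne.symm hne)]
        have h := hγ _ hsm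
        rw [dotp_add_right, dotp_single, dotp_single, hj0val, add_zero] at h
        simpa using h
      · have hsm : Pi.single i (1 : ZMod 2) ∉ deltaC M := by
          rw [mem_deltaC]; push_neg; exact ⟨i, by simp, hi⟩
        have h := hγ _ hsm
        rw [dotp_single] at h
        simpa using h
    have hinj : Function.Injective (cwL Ds) := by
      intro v v' h
      have hc : ∀ t : Fin m → ZMod 2, t ∉ deltaC M →
          dotp v.1 t = dotp v'.1 t ∧ dotp v.2 t = dotp v'.2 t := by
        intro t ht
        have hmem := hnotmem t ht
        have h2 := congrFun h ⟨(t, 0), hmem⟩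
        exact ⟨congrArg Prod.fst h2, congrArg Prod.snd h2⟩
      have h1 : v.1 = v'.1 := by
        have hg : v.1 + v'.1 = 0 := hdet _ (fun t ht => by
          rw [dotp_add_left, (hc t ht).1]
          exact hzself _)
        funext i
        exact hz1 _ _ (congrFun hg i)
      have h2 : v.2 = v'.2 := by
        have hg : v.2 + v'.2 = 0 := hdet _ (fun t ht => by
          rw [dotp_add_left, (hc t ht).2]
          exact hzself _)
        funext i
        exact hz1 _ _ (congrFun hg i)
      exact Prod.ext h1 h2
    rw [Finset.card_image_of_injective _ hinj, Finset.card_univ, Fintype.card_prod,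
      hcardV, ← pow_add]
    congr 1; omega
  · -- the weight distribution
    have hzero_mem : (0 : Fin m → ZMod 2) ∈ deltaC Mᶜ := by
      rw [mem_deltaC]; intro i hi; simp at hi
    have huniv_delta : deltaC (Finset.univ : Finset (Fin m)) = Finset.univ := by
      ext w; simp [deltaC]
    have hcard_univ_fin : (Finset.univ : Finset (Fin m)).card = m := by simp
    have hg0 : gfun Ds 0 = 0 := by
      rw [gfun, Finset.card_eq_zero, Finset.filter_eq_empty_iff]
      intro d _
      simp [dotp_zero_left]
    have hU : ∀ γ : Fin m → ZMod 2, γ ≠ 0 →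
        ((Finset.univ.filter (fun t => dotp γ t ≠ 0)).card) = 2 ^ (m - 1) := by
      intro γ hγ
      obtain ⟨i₀, hi₀⟩ : ∃ i, γ i ≠ 0 := by
        by_contra hcon; push_neg at hcon
        exact hγ (funext fun i => hcon i)
      have h := half_count (Finset.univ) γ (Finset.mem_univ i₀) hi₀
      rwa [huniv_delta, hcard_univ_fin] at h
    have hg1 : ∀ a ∈ (deltaC Mᶜ).erase 0, gfun Ds a = 2 ^ (2 * m - 1) := by
      intro a ha
      rw [Finset.mem_erase] at ha
      obtain ⟨ha0, haM⟩ := ha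
      have hvan : ∀ i ∈ M, a i = 0 := by
        intro i hi
        by_contra hne
        have h := mem_deltaC.mp haM i hne
        rw [Finset.mem_compl] at h
        exact h hi
      rw [gfun, hDs, gval, hU a ha0, zero_count M a hvan]
      rw [Nat.zero_mul, Nat.sub_zero, ← pow_add]
      congr 1; omega
    have hg2 : ∀ a ∈ ((deltaC Mᶜ)ᶜ : Finset (Fin m → ZMod 2)),
        gfun Ds a = 2 ^ (2 * m - 1) - 2 ^ (M.card + N.card - 1) := by
      intro a ha
      rw [Finset.mem_compl, mem_deltaC] at ha
      push_neg at ha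
      obtain ⟨i₀, hi₀ne, hi₀M⟩ := ha
      rw [Finset.mem_compl, not_not] at hi₀M
      have ha0 : a ≠ 0 := by
        intro h0
        apply hi₀ne
        rw [h0]; rfl
      have hk1 : 1 ≤ M.card := Finset.card_pos.mpr ⟨i₀, hi₀M⟩
      rw [gfun, hDs, gval, hU a ha0, half_count M a hi₀M hi₀ne, card_deltaC]
      rw [← pow_add, ← pow_add]
      have e1 : (m - 1) + m = 2 * m - 1 := by omega
      have e2 : (M.card - 1) + N.card = M.card + N.card - 1 := by omega
      rw [e1, e2]
    -- multiset computation
    have hstep1 : (Finset.univ : Finset ((Fin m → ZMod 2) × (Fin m → ZMod 2))).val.map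
        (fun v => hammingNorm (gcwL Ds v)) =
        (Finset.univ : Finset ((Fin m → ZMod 2) × (Fin m → ZMod 2))).val.map
        (fun v => gfun Ds v.2 + gfun Ds (v.1 + v.2)) :=
      Multiset.map_congr rfl (fun v _ => hn_split Ds v)
    have hstep2 : (Finset.univ : Finset ((Fin m → ZMod 2) × (Fin m → ZMod 2))).val.map
        (fun v => gfun Ds v.2 + gfun Ds (v.1 + v.2)) =
        (Finset.univ : Finset ((Fin m → ZMod 2) × (Fin m → ZMod 2))).val.map
        (fun w => gfun Ds w.1 + gfun Ds w.2) := by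
      conv_rhs => rw [← Finset.map_univ_equiv (reidx m), Finset.map_val, Multiset.map_map]
      rfl
    have hdec := multiset_decomp (deltaC Mᶜ) 0 hzero_mem
    have hbig := big_multiset ({0} : Finset (Fin m → ZMod 2)) ((deltaC Mᶜ).erase 0)
      ((deltaC Mᶜ)ᶜ) (gfun Ds) (2 ^ (2 * m - 1)) (2 ^ (2 * m - 1) - 2 ^ (M.card + N.card - 1))
      0 hdec rfl hg0 hg1 hg2
    have hcompl_card : (deltaC Mᶜ).card = 2 ^ (m - M.card) := by
      rw [card_deltaC, Finset.card_compl]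
      congr 1
      rw [Fintype.card_fin]
    have hT1card : ((deltaC Mᶜ).erase 0).card = 2 ^ (m - M.card) - 1 := by
      rw [Finset.card_erase_of_mem hzero_mem, hcompl_card]
    have hT2card : (((deltaC Mᶜ)ᶜ : Finset (Fin m → ZMod 2))).card
        = 2 ^ m - 2 ^ (m - M.card) := by
      rw [Finset.card_compl, hcompl_card, hcardV]
    rw [hstep1, hstep2, hbig, hT1card, hT2card]
    -- arithmetic identities
    have hVA : (2 : ℕ) ^ (2 * m) = 2 ^ (2 * m - 1) + 2 ^ (2 * m - 1) := by
      have e : (2 : ℕ) ^ (2 * m - 1) + 2 ^ (2 * m - 1) = 2 ^ (2 * m - 1 + 1) := by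
        rw [pow_succ]; ring
      rw [e]; congr 1; omega
    have hle1 : (2 : ℕ) ^ (M.card + N.card - 1) ≤ 2 ^ (2 * m - 1) :=
      Nat.pow_le_pow_right (by norm_num) (by omega)
    have hVC : (2 : ℕ) ^ (2 * m) - 2 ^ (M.card + N.card)
        = (2 ^ (2 * m - 1) - 2 ^ (M.card + N.card - 1))
          + (2 ^ (2 * m - 1) - 2 ^ (M.card + N.card - 1)) := by
      have e2 : (2 : ℕ) ^ (M.card + N.card)
          = 2 ^ (M.card + N.card - 1) + 2 ^ (M.card + N.card - 1) := by
        have e : (2 : ℕ) ^ (M.card + N.card - 1) + 2 ^ (M.card + N.card - 1)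
            = 2 ^ (M.card + N.card - 1 + 1) := by rw [pow_succ]; ring
        rw [e]; congr 1; omega
      rw [hVA, e2]
      generalize (2 : ℕ) ^ (2 * m - 1) = x at hle1 ⊢
      generalize (2 : ℕ) ^ (M.card + N.card - 1) = y at hle1 ⊢
      omega
    have hVD : (2 : ℕ) ^ (2 * m) - 2 ^ (M.card + N.card - 1)
        = 2 ^ (2 * m - 1) + (2 ^ (2 * m - 1) - 2 ^ (M.card + N.card - 1)) := by
      rw [hVA]
      generalize (2 : ℕ) ^ (2 * m - 1) = x at hle1 ⊢
      generalize (2 : ℕ) ^ (M.card + N.card - 1) = y at hle1 ⊢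
      omega
    have ha2 : 2 ≤ (2 : ℕ) ^ (m - M.card) := by
      calc (2 : ℕ) = 2 ^ 1 := rfl
      _ ≤ 2 ^ (m - M.card) := Nat.pow_le_pow_right (by norm_num) (by omega)
    have hc1 : 1 ≤ (2 : ℕ) ^ M.card := Nat.one_le_two_pow
    have e_m : (2 : ℕ) ^ m = 2 ^ M.card * 2 ^ (m - M.card) := by
      rw [← pow_add]; congr 1; omega
    have hP2 : (2 : ℕ) ^ (m - M.card + 1) - 2
        = (2 ^ (m - M.card) - 1) + (2 ^ (m - M.card) - 1) := by
      have e : (2 : ℕ) ^ (m - M.card + 1) = 2 ^ (m - M.card) + 2 ^ (m - M.card) := by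
        rw [pow_succ]; ring
      rw [e]
      generalize (2 : ℕ) ^ (m - M.card) = x at ha2 ⊢
      omega
    have hP5 : (2 : ℕ) ^ (m + 1) - 2 ^ (m - M.card + 1)
        = (2 ^ m - 2 ^ (m - M.card)) + (2 ^ m - 2 ^ (m - M.card)) := by
      have e1 : (2 : ℕ) ^ (m + 1) = 2 ^ m + 2 ^ m := by rw [pow_succ]; ring
      have e2 : (2 : ℕ) ^ (m - M.card + 1) = 2 ^ (m - M.card) + 2 ^ (m - M.card) := by
        rw [pow_succ]; ring
      have hle : (2 : ℕ) ^ (m - M.card) ≤ 2 ^ m := Nat.pow_le_pow_right (by norm_num) (by omega)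
      rw [e1, e2]
      generalize (2 : ℕ) ^ m = x at hle ⊢
      generalize (2 : ℕ) ^ (m - M.card) = y at hle ⊢
      omega
    have hP1 : (2 : ℕ) ^ (2 * m - 2 * M.card) - 2 ^ (m - M.card + 1) + 1
        = (2 ^ (m - M.card) - 1) * (2 ^ (m - M.card) - 1) := by
      have e1 : (2 : ℕ) ^ (2 * m - 2 * M.card) = 2 ^ (m - M.card) * 2 ^ (m - M.card) := by
        rw [← pow_add]; congr 1; omega
      have e2 : (2 : ℕ) ^ (m - M.card + 1) = 2 ^ (m - M.card) + 2 ^ (m - M.card) := by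
        rw [pow_succ]; ring
      rw [e1, e2]
      generalize (2 : ℕ) ^ (m - M.card) = x at ha2 ⊢
      obtain ⟨b, rfl⟩ : ∃ b, x = b + 2 := ⟨x - 2, by omega⟩
      have h1 : (b + 2) * (b + 2) = b * b + 4 * b + 4 := by ring
      have h2 : (b + 2 - 1) * (b + 2 - 1) = b * b + 2 * b + 1 := by
        have e : b + 2 - 1 = b + 1 := by omega
        rw [e]; ring
      rw [h1, h2]
      generalize b * b = B
      omega
    have hP3 : (2 : ℕ) ^ (2 * m) + 2 ^ (2 * m - 2 * M.card) - 2 ^ (2 * m - M.card + 1)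
        = (2 ^ m - 2 ^ (m - M.card)) * (2 ^ m - 2 ^ (m - M.card)) := by
      have e1 : (2 : ℕ) ^ (2 * m)
          = (2 ^ M.card * 2 ^ (m - M.card)) * (2 ^ M.card * 2 ^ (m - M.card)) := by
        rw [← pow_add, ← pow_add]; congr 1; omega
      have e2 : (2 : ℕ) ^ (2 * m - 2 * M.card) = 2 ^ (m - M.card) * 2 ^ (m - M.card) := by
        rw [← pow_add]; congr 1; omega
      have e3 : (2 : ℕ) ^ (2 * m - M.card + 1)
          = 2 * ((2 ^ M.card * 2 ^ (m - M.card)) * 2 ^ (m - M.card)) := by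
        rw [show 2 * m - M.card + 1 = 1 + (M.card + ((m - M.card) + (m - M.card))) from by omega,
          pow_add, pow_add, pow_add]
        ring
      rw [e1, e2, e3, e_m]
      generalize (2 : ℕ) ^ M.card = c at hc1 ⊢
      generalize (2 : ℕ) ^ (m - M.card) = a at ha2 ⊢
      obtain ⟨d, rfl⟩ : ∃ d, c = d + 1 := ⟨c - 1, by omega⟩
      have h3 : (d + 1) * a - a = d * a := by
        have h : (d + 1) * a = d * a + a := by ring
        generalize d * a = u at h ⊢
        generalize (d + 1) * a = w at h ⊢
        omega
      rw [h3]
      have h1 : ((d + 1) * a) * ((d + 1) * a) = (d * a) * (d * a) + 2 * (d * (a * a)) + a * a := by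
        ring
      have h2 : 2 * (((d + 1) * a) * a) = 2 * (d * (a * a)) + 2 * (a * a) := by ring
      rw [h1, h2]
      generalize (d * a) * (d * a) = P
      generalize d * (a * a) = Q
      generalize a * a = R
      omega
    have hP4 : (2 : ℕ) ^ (2 * m - M.card + 1) + 2 ^ (m - M.card + 1)
          - 2 ^ (2 * m - 2 * M.card + 1) - 2 ^ (m + 1)
        = (2 ^ (m - M.card) - 1) * (2 ^ m - 2 ^ (m - M.card))
          + (2 ^ m - 2 ^ (m - M.card)) * (2 ^ (m - M.card) - 1) := by
      have e3 : (2 : ℕ) ^ (2 * m - M.card + 1)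
          = 2 * ((2 ^ M.card * 2 ^ (m - M.card)) * 2 ^ (m - M.card)) := by
        rw [show 2 * m - M.card + 1 = 1 + (M.card + ((m - M.card) + (m - M.card))) from by omega,
          pow_add, pow_add, pow_add]
        ring
      have e5 : (2 : ℕ) ^ (m - M.card + 1) = 2 * 2 ^ (m - M.card) := by rw [pow_succ]; ring
      have e6 : (2 : ℕ) ^ (2 * m - 2 * M.card + 1)
          = 2 * (2 ^ (m - M.card) * 2 ^ (m - M.card)) := by
        rw [show 2 * m - 2 * M.card + 1 = 1 + ((m - M.card) + (m - M.card)) from by omega,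
          pow_add, pow_add]
        ring
      have e7 : (2 : ℕ) ^ (m + 1) = 2 * (2 ^ M.card * 2 ^ (m - M.card)) := by
        rw [show m + 1 = 1 + (M.card + (m - M.card)) from by omega, pow_add, pow_add]
        ring
      rw [e3, e5, e6, e7, e_m]
      generalize (2 : ℕ) ^ M.card = c at hc1 ⊢
      generalize (2 : ℕ) ^ (m - M.card) = a at ha2 ⊢
      obtain ⟨d, rfl⟩ : ∃ d, c = d + 1 := ⟨c - 1, by omega⟩
      obtain ⟨b, rfl⟩ : ∃ b, a = b + 2 := ⟨a - 2, by omega⟩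
      have hq : (d + 1) * (b + 2) - (b + 2) = d * (b + 2) := by
        have h : (d + 1) * (b + 2) = d * (b + 2) + (b + 2) := by ring
        generalize d * (b + 2) = u at h ⊢
        generalize (d + 1) * (b + 2) = w at h ⊢
        omega
      have hp : (b + 2) - 1 = b + 1 := by omega
      rw [hq, hp]
      have key : 2 * (((d + 1) * (b + 2)) * (b + 2)) + 2 * (b + 2)
          = 2 * ((b + 2) * (b + 2)) + 2 * ((d + 1) * (b + 2))
            + ((b + 1) * (d * (b + 2)) + (d * (b + 2)) * (b + 1)) := by ring
      generalize 2 * (((d + 1) * (b + 2)) * (b + 2)) = A at key ⊢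
      generalize 2 * ((b + 2) * (b + 2)) = Cc at key ⊢
      generalize 2 * ((d + 1) * (b + 2)) = Dd at key ⊢
      generalize (b + 1) * (d * (b + 2)) = R1 at key ⊢
      generalize (d * (b + 2)) * (b + 1) = R2 at key ⊢
      omega
    rw [hP1, hP2, hP3, hP4, hP5, hVC, hVD, hVA]
    rw [Multiset.replicate_add, Multiset.replicate_add, Multiset.replicate_add]
    have hcomm : (2 ^ (2 * m - 1) - 2 ^ (M.card + N.card - 1)) + 2 ^ (2 * m - 1)
        = 2 ^ (2 * m - 1) + (2 ^ (2 * m - 1) - 2 ^ (M.card + N.card - 1)) := Nat.add_comm _ _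
    rw [hcomm]
    abel
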